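/- Every lens F : A → B admits a factorisation F = M ∘ E in the category Lens in which the get functor of E is surjective both on objects and on morphisms and M is a monomorphism in Lens. -/

import Mathlib

universe u

open CategoryTheory CategoryTheory.Limits

namespace LensPaper

section OutDefs

variable {A : Type*} [Category A] {B : Type*} [Category B] {C : Type*} [Category C]

/-- The "out-set" of an object: the collection of all morphisms out of `X`,
bundled with their targets. -/
def Out (X : A) : Type _ := Σ Y : A, X ⟶ Y

/-- The identity element of an out-set. -/
def Out.id (X : A) : Out X := ⟨X, 𝟙 X⟩

/-- Composition of a morphism out of `X` with a morphism out of its target. -/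
def Out.comp {X : A} (u : Out X) (v : Out u.1) : Out X := ⟨v.1, u.2 ≫ v.2⟩

/-- Transport of out-sets along an equality of objects. -/
def Out.cast {X Y : A} (h : X = Y) (u : Out X) : Out Y := ⟨u.1, eqToHom h.symm ≫ u.2⟩

@[simp] theorem Out.cast_rfl {X : A} (u : Out X) : Out.cast rfl u = u := by
  cases u; simp [Out.cast] <;> rfl

theorem Out.cast_cast {X Y Z : A} (h₁ : X = Y) (h₂ : Y = Z) (u : Out X) :
    Out.cast h₂ (Out.cast h₁ u) = Out.cast (h₁.trans h₂) u := by
  subst h₁; subst h₂; simp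

/-- The action of a functor on out-sets. -/
def mapOut (F : A ⥤ B) {X : A} (u : Out X) : Out (F.obj X) := ⟨F.obj u.1, F.map u.2⟩

theorem mapOut_cast (F : A ⥤ B) {X Y : A} (h : X = Y) (u : Out X) :
    mapOut F (Out.cast h u) = Out.cast (congrArg F.obj h) (mapOut F u) := by
  subst h; simp

/-- The set of all morphisms of a category, bundled with their endpoints. -/
def Mor (A : Type*) [Category A] : Type _ := Σ (X Y : A), X ⟶ Y

/-- The action of a functor on morphisms, as a function on bundled morphisms. -/
def mapMor (F : A ⥤ B) : Mor A → Mor B := fun m => ⟨F.obj m.1, F.obj m.2.1, F.map m.2.2⟩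

/-- The set of composable pairs of morphisms of a category. -/
def CompPair (A : Type*) [Category A] : Type _ := Σ (X Y Z : A), (X ⟶ Y) × (Y ⟶ Z)

/-- The action of a functor on composable pairs. -/
def mapCompPair (F : A ⥤ B) : CompPair A → CompPair B :=
  fun p => ⟨F.obj p.1, F.obj p.2.1, F.obj p.2.2.1, (F.map p.2.2.2.1, F.map p.2.2.2.2)⟩

/-- A functor is a discrete opfibration if every morphism out of `F.obj X`
has a unique lift to a morphism out of `X`. -/
def IsDiscreteOpfibration (F : A ⥤ B) : Prop :=
  ∀ (X : A) (u : Out (F.obj X)), ∃! v : Out X, mapOut F v = u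

/-- A cosieve is an injective-on-objects discrete opfibration. -/
def IsCosieve (F : A ⥤ B) : Prop :=
  IsDiscreteOpfibration F ∧ Function.Injective F.obj

end OutDefs

/-- An (asymmetric delta) lens: a get functor together with put functions
satisfying PutGet, PutId and PutPut. -/
structure DLens (A : Type*) (B : Type*) [Category A] [Category B] where
  get : A ⥤ B
  put : ∀ (X : A), Out (get.obj X) → Out X
  putGet : ∀ (X : A) (u : Out (get.obj X)), mapOut get (put X u) = u
  putId : ∀ (X : A), put X (Out.id (get.obj X)) = Out.id X
  putPut : ∀ (X : A) (u : Out (get.obj X)) (v : Out u.1) (h : u.1 = get.obj (put X u).1),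
      put X (u.comp v) = (put X u).comp (put (put X u).1 (Out.cast h v))

namespace DLens

variable {A : Type*} [Category A] {B : Type*} [Category B] {C : Type*} [Category C]

theorem put_cast (F : DLens A B) {X₁ X₂ : A} (e : X₁ = X₂) (u : Out (F.get.obj X₁)) :
    Out.cast e (F.put X₁ u) = F.put X₂ (Out.cast (congrArg F.get.obj e) u) := by
  subst e; simp

/-- The identity lens. -/
def id (A : Type*) [Category A] : DLens A A where
  get := Functor.id A
  put X u := u
  putGet X u := rfl
  putId X := rfl
  putPut X u v h := by
    have hv : Out.cast h v = v := Out.cast_rfl v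
    rw [hv]

/-- Composition of lenses. -/
def comp (F : DLens A B) (G : DLens B C) : DLens A C where
  get := F.get ⋙ G.get
  put X u := F.put X (G.put (F.get.obj X) u)
  putGet X u := by
    show mapOut G.get (mapOut F.get (F.put X (G.put (F.get.obj X) u))) = u
    rw [F.putGet, G.putGet]
  putId X := by
    show F.put X (G.put (F.get.obj X) (Out.id (G.get.obj (F.get.obj X)))) = Out.id X
    rw [G.putId, F.putId]
  putPut X u v h := by
    have h₁ : u.1 = G.get.obj (G.put (F.get.obj X) u).1 :=
      (congrArg Sigma.fst (G.putGet (F.get.obj X) u)).symm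
    show F.put X (G.put (F.get.obj X) (u.comp v)) = _
    rw [G.putPut (F.get.obj X) u v h₁]
    have h₂ : (G.put (F.get.obj X) u).1 =
        F.get.obj (F.put X (G.put (F.get.obj X) u)).1 :=
      (congrArg Sigma.fst (F.putGet X (G.put (F.get.obj X) u))).symm
    rw [F.putPut X (G.put (F.get.obj X) u) _ h₂]
    rw [put_cast G h₂, Out.cast_cast]

end DLens

/-- The category of small categories and (asymmetric delta) lenses. -/
def LensCat : Type (u + 1) := Cat.{u, u}

/-- Regard a small category as an object of the category of lenses. -/
def LensCat.of (C : Cat.{u, u}) : LensCat.{u} := C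

/-- The underlying small category of an object of the category of lenses. -/
def LensCat.toCat (A : LensCat.{u}) : Cat.{u, u} := A

instance : Category.{u} LensCat.{u} where
  Hom A B := DLens A.toCat B.toCat
  id A := DLens.id A.toCat
  comp F G := F.comp G
  id_comp F := rfl
  comp_id F := rfl
  assoc F G H := rfl

/-- The get functor of a lens, i.e. a morphism of `LensCat` regarded as a `DLens`. -/
def LensCat.get {A B : LensCat.{u}} (F : A ⟶ B) : A.toCat ⟶ B.toCat := (DLens.get F).toCatHom

/-- The identity-on-objects forgetful functor from the category of lenses to the
category of small categories and functors, sending a lens to its get functor. -/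
def lensForget : LensCat.{u} ⥤ Cat.{u, u} where
  obj A := A.toCat
  map F := (DLens.get F).toCatHom
  map_id A := rfl
  map_comp F G := rfl

end LensPaper
open CategoryTheory CategoryTheory.Limits LensPaper

/-!
The objects in the image of the get functor of a lens `F : A ⟶ B` are closed under outgoing
morphisms: lift along the put and apply PutGet. So `F` corestricts to a lens `E` into the full
subcategory on these objects, surjective on objects and hence, by PutGet, on morphisms, and the
inclusion `M` of that subcategory is a lens whose put is the unique lift. The get functor of `M`
is faithful and injective on objects, so it cancels from `G ⋙ M`, and its action on out-sets is
injective, so by PutGet every out-morphism `v` equals `M.put (mapOut M.get v)`; the puts of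
`G ≫ M` therefore recover those of `G`.
-/

namespace LensPaper

section Functor

variable {A : Type*} [Category A] {B : Type*} [Category B] {C : Type*} [Category C]

theorem mapOut_injective (F : A ⥤ B) [F.Faithful] (hF : Function.Injective F.obj) (X : A) :
    Function.Injective (mapOut F (X := X)) := by
  rintro ⟨Y, f⟩ ⟨Y', f'⟩ h
  obtain ⟨hY, hf⟩ := Sigma.mk.inj_iff.mp h
  obtain rfl : Y = Y' := hF hY
  obtain rfl : f = f' := F.map_injective (eq_of_heq hf)
  rfl

theorem functor_comp_injective (M : B ⥤ C) [M.Faithful] (hM : Function.Injective M.obj) :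
    Function.Injective (fun G : A ⥤ B => G ⋙ M) := by
  intro G H h
  have hobj (X : A) : G.obj X = H.obj X := hM (Functor.congr_obj h X)
  refine CategoryTheory.Functor.ext hobj fun X Y f => M.map_injective ?_
  simpa only [Functor.comp_map, Functor.map_comp, eqToHom_map] using Functor.congr_hom h f

theorem mapMor_surjective_of_lift (F : A ⥤ B) (hobj : Function.Surjective F.obj)
    (hlift : ∀ (X : A) (u : Out (F.obj X)), ∃ v : Out X, mapOut F v = u) :
    Function.Surjective (mapMor F) := by
  rintro ⟨Y, Z, f⟩
  obtain ⟨X, rfl⟩ := hobj Y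
  obtain ⟨v, hv⟩ := hlift X ⟨Z, f⟩
  exact ⟨⟨X, v.1, v.2⟩, congrArg (fun u : Out (F.obj X) => (⟨F.obj X, u.1, u.2⟩ : Mor B)) hv⟩

end Functor

namespace DLens

variable {A : Type*} [Category A] {B : Type*} [Category B] {C : Type*} [Category C]

theorem ext {F G : DLens A B} (hget : F.get = G.get)
    (hput : ∀ X u, F.put X u = G.put X (Out.cast (Functor.congr_obj hget X) u)) : F = G := by
  obtain ⟨get, put, _, _, _⟩ := F
  obtain ⟨get', put', _, _, _⟩ := G
  obtain rfl : get = get' := hget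
  obtain rfl : put = put' := funext fun X => funext fun u => by simpa using hput X u
  rfl

theorem put_eq_of_eq {F G : DLens A B} (h : F = G) (X : A) (u : Out (F.get.obj X)) :
    F.put X u = G.put X (Out.cast (congrArg (fun F : DLens A B => F.get.obj X) h) u) := by
  subst h
  simp

theorem put_mapOut (M : DLens A B) {X : A} (hM : Function.Injective (mapOut M.get (X := X)))
    (v : Out X) : M.put X (mapOut M.get v) = v :=
  hM (M.putGet X (mapOut M.get v))

theorem comp_left_injective (M : DLens B C) [M.get.Faithful] (hM : Function.Injective M.get.obj) :
    Function.Injective (fun G : DLens A B => G.comp M) := by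
  intro G H w
  have hget : G.get = H.get := functor_comp_injective M.get hM (congrArg DLens.get w)
  refine ext hget fun X u => ?_
  have hout (Y : B) := mapOut_injective M.get hM Y
  calc G.put X u = (G.comp M).put X (mapOut M.get u) :=
        (congrArg (G.put X) (M.put_mapOut (hout _) u)).symm
    _ = H.put X (M.put _ (Out.cast _ (mapOut M.get u))) := put_eq_of_eq w X _
    _ = H.put X (Out.cast (Functor.congr_obj hget X) u) := by
        rw [← mapOut_cast, M.put_mapOut (hout _)]

end DLens

section Image

variable {A : Type*} [Category A] {B : Type*} [Category B]

def IsClosedUnderOut (P : ObjectProperty B) : Prop :=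
  ∀ ⦃X Y : B⦄, (X ⟶ Y) → P X → P Y

def inclusionLens (P : ObjectProperty B) (hP : IsClosedUnderOut P) :
    DLens P.FullSubcategory B where
  get := P.ι
  put X u := ⟨⟨u.1, hP u.2 X.2⟩, ObjectProperty.homMk u.2⟩
  putGet _ _ := rfl
  putId _ := rfl
  putPut _ _ _ h := by rw [show h = rfl from rfl, Out.cast_rfl]; rfl

instance (P : ObjectProperty B) (hP : IsClosedUnderOut P) : (inclusionLens P hP).get.Faithful :=
  inferInstanceAs P.ι.Faithful

def DLens.corestrict (F : DLens A B) (P : ObjectProperty B) (hF : ∀ X, P (F.get.obj X)) :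
    DLens A P.FullSubcategory where
  get := P.lift F.get hF
  put X u := F.put X (mapOut P.ι u)
  putGet X u := mapOut_injective P.ι (fun _ _ => ObjectProperty.FullSubcategory.ext) _
    (F.putGet X (mapOut P.ι u))
  putId X := F.putId X
  putPut X u v h := by
    rw [mapOut_cast]
    exact F.putPut X (mapOut P.ι u) (mapOut P.ι v) (congrArg P.ι.obj h)

theorem DLens.corestrict_comp_inclusionLens (F : DLens A B) (P : ObjectProperty B)
    (hF : ∀ X, P (F.get.obj X)) (hP : IsClosedUnderOut P) :
    (F.corestrict P hF).comp (inclusionLens P hP) = F :=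
  rfl

theorem DLens.isClosedUnderOut_ofObj_get_obj (F : DLens A B) :
    IsClosedUnderOut (ObjectProperty.ofObj F.get.obj) := by
  rintro _ Y f ⟨X⟩
  exact (ObjectProperty.ofObj_iff _ _).mpr ⟨_, congrArg Sigma.fst (F.putGet X ⟨Y, f⟩)⟩

theorem lift_ofObj_obj_surjective (F : A ⥤ B) :
    Function.Surjective (ObjectProperty.lift _ F (ObjectProperty.ofObj_apply F.obj)).obj := by
  rintro ⟨_, ⟨X⟩⟩
  exact ⟨X, rfl⟩

end Image

end LensPaper

theorem lens_image_factorisation (A B : LensCat.{u}) (F : A ⟶ B) :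
    ∃ (I : LensCat.{u}) (E : A ⟶ I) (M : I ⟶ B),
      E ≫ M = F ∧
      Function.Surjective (DLens.get E).obj ∧
      Function.Surjective (mapMor (DLens.get E)) ∧
      Mono M := by
  let P := ObjectProperty.ofObj (DLens.get F).obj
  let E : DLens A.toCat P.FullSubcategory := F.corestrict P (ObjectProperty.ofObj_apply _)
  let M : DLens P.FullSubcategory B.toCat := inclusionLens P F.isClosedUnderOut_ofObj_get_obj
  have hE : Function.Surjective E.get.obj := lift_ofObj_obj_surjective _
  refine ⟨LensCat.of (Cat.of P.FullSubcategory), E, M,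
    F.corestrict_comp_inclusionLens P _ _, hE, ?_, ?_⟩
  · exact mapMor_surjective_of_lift E.get hE fun X u => ⟨E.put X u, E.putGet X u⟩
  · exact ⟨fun _ _ w =>
      DLens.comp_left_injective M (fun _ _ => ObjectProperty.FullSubcategory.ext) w⟩
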